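/- arXiv:2112.10119 — 3 statements merged into one kernel-verified Lean document; each statement's English description precedes it below -/
import Mathlib

section
/- Let f : ℝ → ℝ be 4-times continuously differentiable on a closed interval Ω containing [a - 3h/2, a + 3h/2], with h > 0. Define f̄(x) = (1/h)·∫_{x-h/2}^{x+h/2} f(t) dt and Δ²f̄(a) = f̄(a-h) - 2f̄(a) + f̄(a+h). Then |f(a) - (f̄(a) - (1/24)·Δ²f̄(a))| ≤ (3/640)·h⁴·sup_{x∈Ω} |f⁗(x)|. -/
/-!
Let `F` be a primitive of `f`, so that `h * f̄ x = F (x + h/2) - F (x - h/2)`. Then `24 h` times the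
error equals `24 h f a + (F (a + 3h/2) - F (a - 3h/2)) - 27 (F (a + h/2) - F (a - h/2))`. This
stencil kills every polynomial of degree at most `4` except the linear one, on which it gives
`-24 h F' a = -24 h f a`. Expanding `F` at `a` to order `4` with integral remainder therefore
leaves, on each side of `a`, the integral of `f⁗` against the kernel
`((a + 3h/2 - t)⁴ - 27 (a + h/2 - t)₊⁴) / 24`, which is nonnegative with total mass `9 h⁵ / 160`.
-/

open Set Nat intervalIntegral

theorem iteratedDerivWithin_eq_of_subset {𝕜 F : Type*} [NontriviallyNormedField 𝕜]
    [NormedAddCommGroup F] [NormedSpace 𝕜 F] {f : 𝕜 → F} {s t : Set 𝕜} {x : 𝕜} {n : ℕ}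
    (st : s ⊆ t) (hs : UniqueDiffOn 𝕜 s) (ht : UniqueDiffOn 𝕜 t) (hf : ContDiffOn 𝕜 n f t)
    (hx : x ∈ s) : iteratedDerivWithin n f s x = iteratedDerivWithin n f t x := by
  simp only [iteratedDerivWithin_eq_iteratedFDerivWithin,
    iteratedFDerivWithin_subset st hs ht hf hx]

theorem taylor_integral_remainder_of_uIcc_subset {f : ℝ → ℝ} {s : Set ℝ} {x₀ x : ℝ} {n : ℕ}
    (hs : UniqueDiffOn ℝ s) (hf : ContDiffOn ℝ (n + 1 : ℕ) f s) (hsub : uIcc x₀ x ⊆ s) :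
    f x - taylorWithinEval f n s x₀ x =
      ∫ t in x₀..x, (x - t) ^ n / n ! * iteratedDerivWithin (n + 1) f s t := by
  rcases eq_or_ne x₀ x with rfl | hne
  · simp
  have hu : UniqueDiffOn ℝ (uIcc x₀ x) := uniqueDiffOn_uIcc hne
  have hderiv {k : ℕ} (hk : k ≤ n + 1) {t : ℝ} (ht : t ∈ uIcc x₀ x) :
      iteratedDerivWithin k f (uIcc x₀ x) t = iteratedDerivWithin k f s t :=
    iteratedDerivWithin_eq_of_subset hsub hu hs (hf.of_le (by exact_mod_cast hk)) ht
  have htaylor : taylorWithinEval f n (uIcc x₀ x) x₀ x = taylorWithinEval f n s x₀ x := by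
    simp only [taylor_within_apply]
    refine Finset.sum_congr rfl fun k hk => ?_
    rw [hderiv (by simp at hk; omega) left_mem_uIcc]
  rw [← htaylor, taylor_integral_remainder (hf.mono hsub)]
  refine integral_congr fun t ht => ?_
  simp only [smul_eq_mul, hderiv le_rfl ht]

section Primitive

variable {𝕜 : Type*} [NontriviallyNormedField 𝕜] {F f : 𝕜 → 𝕜} {s : Set 𝕜} {n : ℕ}

theorem contDiffOn_succ_of_hasDerivWithinAt (hs : UniqueDiffOn 𝕜 s)
    (hF : ∀ x ∈ s, HasDerivWithinAt F (f x) s x) (hf : ContDiffOn 𝕜 n f s) :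
    ContDiffOn 𝕜 (n + 1 : ℕ) F s := by
  rw [Nat.cast_succ, contDiffOn_succ_iff_derivWithin hs]
  refine ⟨fun x hx => (hF x hx).differentiableWithinAt, by simp, hf.congr fun x hx => ?_⟩
  exact (hF x hx).derivWithin (hs x hx)

theorem iteratedDerivWithin_succ_of_hasDerivWithinAt (hs : UniqueDiffOn 𝕜 s)
    (hF : ∀ x ∈ s, HasDerivWithinAt F (f x) s x) {x : 𝕜} (hx : x ∈ s) :
    iteratedDerivWithin (n + 1) F s x = iteratedDerivWithin n f s x := by
  rw [iteratedDerivWithin_succ']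
  exact iteratedDerivWithin_congr (fun y hy => (hF y hy).derivWithin (hs y hy)) hx

end Primitive

theorem hasDerivWithinAt_integral_Icc {f : ℝ → ℝ} {l u a x : ℝ} (hf : ContinuousOn f (Icc l u))
    (ha : a ∈ Icc l u) (hx : x ∈ Icc l u) :
    HasDerivWithinAt (fun y => ∫ t in a..y, f t) (f x) (Icc l u) x := by
  have : Fact (x ∈ Icc l u) := ⟨hx⟩
  exact integral_hasDerivWithinAt_right ((hf.mono (uIcc_subset_Icc ha hx)).intervalIntegrable)
    (hf.stronglyMeasurableAtFilter_nhdsWithin measurableSet_Icc x) (hf x hx)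

theorem integral_eq_taylorWithinEval_add_remainder {f : ℝ → ℝ} {l u a x : ℝ} {n : ℕ}
    (hlu : l < u) (hf : ContDiffOn ℝ n f (Icc l u)) (ha : a ∈ Icc l u) (hx : x ∈ Icc l u) :
    ∫ t in a..x, f t = taylorWithinEval (fun y => ∫ t in a..y, f t) n (Icc l u) a x
      + ∫ t in a..x, (x - t) ^ n / n ! * iteratedDerivWithin n f (Icc l u) t := by
  have hs : UniqueDiffOn ℝ (Icc l u) := uniqueDiffOn_Icc hlu
  have hF y (hy : y ∈ Icc l u) := hasDerivWithinAt_integral_Icc hf.continuousOn ha hy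
  rw [← sub_eq_iff_eq_add', taylor_integral_remainder_of_uIcc_subset
    (f := fun y => ∫ t in a..y, f t) hs (contDiffOn_succ_of_hasDerivWithinAt hs hF hf)
    (uIcc_subset_Icc ha hx)]
  refine integral_congr fun t ht => ?_
  rw [iteratedDerivWithin_succ_of_hasDerivWithinAt hs hF (uIcc_subset_Icc ha hx ht)]

theorem taylorWithinEval_four_stencil (f : ℝ → ℝ) (s : Set ℝ) (a h : ℝ) :
    taylorWithinEval f 4 s a (a + 3 * h / 2) - taylorWithinEval f 4 s a (a - 3 * h / 2)
      - 27 * (taylorWithinEval f 4 s a (a + h / 2) - taylorWithinEval f 4 s a (a - h / 2))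
      = -24 * h * derivWithin f s a := by
  simp only [taylor_within_apply, Finset.sum_range_succ, Finset.sum_range_zero,
    iteratedDerivWithin_one, smul_eq_mul]
  norm_num [Nat.factorial]
  ring

/-- With `g = f⁗`, the contribution of the integral Taylor remainders of a primitive of `f`,
expanded at `a`, to the stencil on the side of `a` towards which `h` points. -/
noncomputable def stencilRemainder (g : ℝ → ℝ) (a h : ℝ) : ℝ :=
  (∫ t in a..(a + 3 * h / 2), (a + 3 * h / 2 - t) ^ 4 / 24 * g t)
    - 27 * ∫ t in a..(a + h / 2), (a + h / 2 - t) ^ 4 / 24 * g t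

theorem integral_stencil_eq_add_stencilRemainder {f : ℝ → ℝ} {a h l u : ℝ} (hh : 0 < h)
    (hsub : Icc (a - 3 * h / 2) (a + 3 * h / 2) ⊆ Icc l u) (hf : ContDiffOn ℝ 4 f (Icc l u)) :
    (∫ t in (a - 3 * h / 2)..(a + 3 * h / 2), f t) - 27 * ∫ t in (a - h / 2)..(a + h / 2), f t
      = -24 * h * f a + stencilRemainder (iteratedDerivWithin 4 f (Icc l u)) a h
        - stencilRemainder (iteratedDerivWithin 4 f (Icc l u)) a (-h) := by
  have ha : a ∈ Icc l u := hsub ⟨by linarith, by linarith⟩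
  have hp3 : a + 3 * h / 2 ∈ Icc l u := hsub ⟨by linarith, le_rfl⟩
  have hm3 : a - 3 * h / 2 ∈ Icc l u := hsub ⟨le_rfl, by linarith⟩
  have hp1 : a + h / 2 ∈ Icc l u := hsub ⟨by linarith, by linarith⟩
  have hm1 : a - h / 2 ∈ Icc l u := hsub ⟨by linarith, by linarith⟩
  have hlu : l < u := lt_of_le_of_lt hm3.1 (lt_of_lt_of_le (by linarith) hp3.2)
  have hint {x : ℝ} (hx : x ∈ Icc l u) : IntervalIntegrable f MeasureTheory.volume a x :=
    (hf.continuousOn.mono (uIcc_subset_Icc ha hx)).intervalIntegrable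
  have hexpand {x : ℝ} (hx : x ∈ Icc l u) :=
    integral_eq_taylorWithinEval_add_remainder hlu hf ha hx
  have hderiv := (hasDerivWithinAt_integral_Icc hf.continuousOn ha ha).derivWithin
    (uniqueDiffOn_Icc hlu a ha)
  have htaylor := taylorWithinEval_four_stencil (fun y => ∫ t in a..y, f t) (Icc l u) a h
  rw [hderiv] at htaylor
  rw [← integral_interval_sub_left (hint hp3) (hint hm3),
    ← integral_interval_sub_left (hint hp1) (hint hm1),
    hexpand hp3, hexpand hm3, hexpand hp1, hexpand hm1]
  simp only [stencilRemainder, mul_neg, neg_div, ← sub_eq_add_neg,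
    show ((4 ! : ℕ) : ℝ) = 24 by norm_num [Nat.factorial]]
  linarith

theorem abs_integral_mul_le_of_nonneg {k g : ℝ → ℝ} {c d M : ℝ}
    (hk : ContinuousOn k (uIcc c d)) (hk0 : ∀ t ∈ uIcc c d, 0 ≤ k t)
    (hg : ∀ t ∈ uIcc c d, |g t| ≤ M) :
    |∫ t in c..d, k t * g t| ≤ M * |∫ t in c..d, k t| := by
  wlog hcd : c ≤ d generalizing c d
  · rw [integral_symm, abs_neg, integral_symm d, abs_neg]
    rw [uIcc_comm] at hk hk0 hg
    exact this hk hk0 hg (le_of_not_ge hcd)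
  rw [uIcc_of_le hcd] at hk hk0 hg
  rw [abs_of_nonneg (integral_nonneg (μ := MeasureTheory.volume) hcd hk0), ← integral_const_mul,
    ← Real.norm_eq_abs]
  refine norm_integral_le_of_norm_le hcd (Filter.Eventually.of_forall fun t ht => ?_)
    ((hk.intervalIntegrable_of_Icc (μ := MeasureTheory.volume) hcd).const_mul M)
  rw [Real.norm_eq_abs, abs_mul, abs_of_nonneg (hk0 t (Ioc_subset_Icc_self ht)), mul_comm M]
  exact mul_le_mul_of_nonneg_left (hg t (Ioc_subset_Icc_self ht)) (hk0 t (Ioc_subset_Icc_self ht))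

theorem integral_sub_pow (e c d : ℝ) (n : ℕ) :
    ∫ t in c..d, (e - t) ^ n = ((e - c) ^ (n + 1) - (e - d) ^ (n + 1)) / (n + 1) := by
  rw [integral_comp_sub_left (fun x => x ^ n), integral_pow]

theorem stencil_kernel_nonneg {a h t : ℝ} (ht : t ∈ uIcc a (a + h / 2)) :
    0 ≤ (a + 3 * h / 2 - t) ^ 4 - 27 * (a + h / 2 - t) ^ 4 := by
  have hsq : 9 * (a + h / 2 - t) ^ 2 ≤ (a + 3 * h / 2 - t) ^ 2 := by
    rcases mem_uIcc.mp ht with ⟨h₁, h₂⟩ | ⟨h₁, h₂⟩ <;> nlinarith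
  nlinarith [pow_le_pow_left₀ (by positivity) hsq 2, pow_nonneg (sq_nonneg (a + h / 2 - t)) 2]

theorem abs_stencilRemainder_le {g : ℝ → ℝ} {a h M : ℝ}
    (hg : ContinuousOn g (uIcc a (a + 3 * h / 2))) (hM : ∀ t ∈ uIcc a (a + 3 * h / 2), |g t| ≤ M) :
    |stencilRemainder g a h| ≤ 9 / 160 * |h| ^ 5 * M := by
  have hmid : a + h / 2 ∈ uIcc a (a + 3 * h / 2) := by
    rcases le_total 0 h with hh | hh
    · exact mem_uIcc.mpr (Or.inl ⟨by linarith, by linarith⟩)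
    · exact mem_uIcc.mpr (Or.inr ⟨by linarith, by linarith⟩)
  have hnear : uIcc a (a + h / 2) ⊆ uIcc a (a + 3 * h / 2) := uIcc_subset_uIcc left_mem_uIcc hmid
  have hfar : uIcc (a + h / 2) (a + 3 * h / 2) ⊆ uIcc a (a + 3 * h / 2) :=
    uIcc_subset_uIcc hmid right_mem_uIcc
  have hint {e b c : ℝ} (hbc : uIcc b c ⊆ uIcc a (a + 3 * h / 2)) :
      IntervalIntegrable (fun t => (e - t) ^ 4 / 24 * g t) MeasureTheory.volume b c :=
    ((by fun_prop : Continuous fun t : ℝ => (e - t) ^ 4 / 24).continuousOn.mul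
      (hg.mono hbc)).intervalIntegrable
  have hsplit : stencilRemainder g a h
      = (∫ t in a..(a + h / 2), ((a + 3 * h / 2 - t) ^ 4 - 27 * (a + h / 2 - t) ^ 4) / 24 * g t)
        + ∫ t in (a + h / 2)..(a + 3 * h / 2), (a + 3 * h / 2 - t) ^ 4 / 24 * g t := by
    rw [stencilRemainder, ← integral_add_adjacent_intervals (hint hnear) (hint hfar),
      ← integral_const_mul, add_sub_right_comm,
      ← integral_sub (hint hnear) ((hint hnear).const_mul 27)]
    congr 1
    exact integral_congr fun t _ => by ring
  have hnear_le := abs_integral_mul_le_of_nonneg (g := g) (M := M)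
    (k := fun t => ((a + 3 * h / 2 - t) ^ 4 - 27 * (a + h / 2 - t) ^ 4) / 24) (by fun_prop)
    (fun t ht => div_nonneg (stencil_kernel_nonneg ht) (by norm_num))
    (fun t ht => hM t (hnear ht))
  have hfar_le := abs_integral_mul_le_of_nonneg (g := g) (M := M)
    (k := fun t => (a + 3 * h / 2 - t) ^ 4 / 24) (by fun_prop) (fun t _ => by positivity)
    (fun t ht => hM t (hfar ht))
  have hnear_kernel :
      ∫ t in a..(a + h / 2), ((a + 3 * h / 2 - t) ^ 4 - 27 * (a + h / 2 - t) ^ 4) / 24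
        = 23 * h ^ 5 / 480 := by
    rw [integral_div, integral_sub, integral_const_mul, integral_sub_pow, integral_sub_pow]
    · ring
    all_goals exact (by fun_prop : Continuous _).intervalIntegrable _ _
  have hfar_kernel : ∫ t in (a + h / 2)..(a + 3 * h / 2), (a + 3 * h / 2 - t) ^ 4 / 24
      = h ^ 5 / 120 := by
    rw [integral_div, integral_sub_pow]
    ring
  rw [hnear_kernel] at hnear_le
  rw [hfar_kernel] at hfar_le
  calc |stencilRemainder g a h| ≤ _ := hsplit ▸ abs_add_le _ _
    _ ≤ M * |23 * h ^ 5 / 480| + M * |h ^ 5 / 120| := add_le_add hnear_le hfar_le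
    _ = 9 / 160 * |h| ^ 5 * M := by simp only [abs_div, abs_mul, abs_pow]; norm_num; ring

theorem abs_le_iSup_abs_of_continuousOn_Icc {g : ℝ → ℝ} {l u x : ℝ}
    (hg : ContinuousOn g (Icc l u)) (hx : x ∈ Icc l u) : |g x| ≤ ⨆ y : Icc l u, |g y| := by
  have hbdd : BddAbove (range fun y : Icc l u => |g y|) := by
    simpa only [image_eq_range] using (isCompact_Icc.image_of_continuousOn hg.abs).bddAbove
  exact le_ciSup hbdd ⟨x, hx⟩

theorem reconstruction_error_eq_stencilRemainder {f fb : ℝ → ℝ} {a h l u : ℝ} (hh : 0 < h)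
    (hsub : Icc (a - 3 * h / 2) (a + 3 * h / 2) ⊆ Icc l u) (hf : ContDiffOn ℝ 4 f (Icc l u))
    (hfb : ∀ x, fb x = (1 / h) * ∫ t in (x - h / 2)..(x + h / 2), f t) :
    f a - (fb a - 1 / 24 * (fb (a - h) - 2 * fb a + fb (a + h)))
      = (stencilRemainder (iteratedDerivWithin 4 f (Icc l u)) a h
        - stencilRemainder (iteratedDerivWithin 4 f (Icc l u)) a (-h)) / (24 * h) := by
  have hp3 : a + 3 * h / 2 ∈ Icc l u := hsub ⟨by linarith, le_rfl⟩
  have hm3 : a - 3 * h / 2 ∈ Icc l u := hsub ⟨le_rfl, by linarith⟩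
  have hp1 : a + h / 2 ∈ Icc l u := hsub ⟨by linarith, by linarith⟩
  have hm1 : a - h / 2 ∈ Icc l u := hsub ⟨by linarith, by linarith⟩
  have hint {b c : ℝ} (hb : b ∈ Icc l u) (hc : c ∈ Icc l u) :
      IntervalIntegrable f MeasureTheory.volume b c :=
    (hf.continuousOn.mono (uIcc_subset_Icc hb hc)).intervalIntegrable
  have hcell (x : ℝ) : h * fb x = ∫ t in (x - h / 2)..(x + h / 2), f t := by
    rw [hfb]
    field_simp
  have hcells : h * fb (a - h) + h * fb a + h * fb (a + h)
      = ∫ t in (a - 3 * h / 2)..(a + 3 * h / 2), f t := by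
    rw [hcell, hcell, hcell, show a - h - h / 2 = a - 3 * h / 2 by ring,
      show a - h + h / 2 = a - h / 2 by ring, show a + h - h / 2 = a + h / 2 by ring,
      show a + h + h / 2 = a + 3 * h / 2 by ring, integral_add_adjacent_intervals (hint hm3 hm1)
      (hint hm1 hp1), integral_add_adjacent_intervals (hint hm3 hp1) (hint hp1 hp3)]
  rw [eq_div_iff (by positivity)]
  linear_combination hcells - 27 * hcell a + integral_stencil_eq_add_stencilRemainder hh hsub hf

theorem stmt7 (f : ℝ → ℝ) (a h l u : ℝ) (hh : 0 < h)
    (hsub : Set.Icc (a - 3 * h / 2) (a + 3 * h / 2) ⊆ Set.Icc l u)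
    (hf : ContDiffOn ℝ 4 f (Set.Icc l u))
    (fb : ℝ → ℝ)
    (hfb : ∀ x, fb x = (1 / h) * ∫ t in (x - h / 2)..(x + h / 2), f t) :
    |f a - (fb a - (1 / 24) * (fb (a - h) - 2 * fb a + fb (a + h)))|
      ≤ (3 / 640) * h ^ 4
          * ⨆ x : Set.Icc l u, |iteratedDerivWithin 4 f (Set.Icc l u) x| := by
  have ha : a ∈ Icc l u := hsub ⟨by linarith, by linarith⟩
  have hp3 : a + 3 * h / 2 ∈ Icc l u := hsub ⟨by linarith, le_rfl⟩
  have hm3 : a + 3 * -h / 2 ∈ Icc l u := hsub ⟨by linarith, by linarith⟩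
  have hgc : ContinuousOn (iteratedDerivWithin 4 f (Icc l u)) (Icc l u) :=
    hf.continuousOn_iteratedDerivWithin le_rfl
      (uniqueDiffOn_Icc (lt_of_le_of_lt hm3.1 (lt_of_lt_of_le (by linarith) hp3.2)))
  have hbound {σ : ℝ} (hσ : a + 3 * σ / 2 ∈ Icc l u) :=
    abs_stencilRemainder_le (hgc.mono (uIcc_subset_Icc ha hσ))
      fun t ht => abs_le_iSup_abs_of_continuousOn_Icc hgc (uIcc_subset_Icc ha hσ ht)
  have h24 : (0 : ℝ) < 24 * h := by positivity
  rw [reconstruction_error_eq_stencilRemainder hh hsub hf hfb, abs_div, abs_of_pos h24,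
    div_le_iff₀ h24]
  calc _ ≤ _ := abs_sub _ _
    _ ≤ _ := add_le_add (hbound hp3) (hbound hm3)
    _ = _ := by rw [abs_neg, abs_of_pos hh]; ring
end

section
/- Let m ≥ 1. Define the m×m matrix M with entries m_{i,j} = ∑_{t=0}^{i-j} [1/(2^{2t-1}·(2t+1)!·(2(i-t))!)] · ∑_{s=j+1}^{2j} (-1)^s·C(2j,s)·(s-j)^{2(i-t)} for 1 ≤ i,j ≤ m. Then m_{i,j} = 0 whenever i < j and m_{i,i} = 1 for all i; in particular, M is lower unitriangular and invertible. -/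
/-!
For `i ≤ j` only the term `t = 0` survives. Its inner summand is symmetric under
`s ↦ 2(j+1) - s` and vanishes at `s = j+1`, so the inner sum is half of the full alternating
binomial sum, i.e. half of the `2(j+1)`-th forward difference of `r ↦ r^(2(i+1))` at `-(j+1)`.
That difference is `0` for `i < j` and `(2(i+1))!` for `i = j`, so `M` is lower unitriangular.
-/

open Finset fwdDiff

theorem sum_range_neg_one_pow_mul_choose_mul_sub_pow {R : Type*} [CommRing R] (n k : ℕ) (c : R) :
    ∑ s ∈ range (n + 1), (-1 : R) ^ s * n.choose s * ((s : R) - c) ^ k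
      = (-1) ^ n * Δ_[1] ^[n] (fun r : R ↦ r ^ k) (-c) := by
  rw [fwdDiff_iter_eq_sum_shift, mul_sum]
  refine sum_congr rfl fun s hs ↦ ?_
  obtain ⟨d, rfl⟩ := Nat.exists_eq_add_of_le (Nat.lt_succ_iff.mp (mem_range.mp hs))
  rw [Nat.add_sub_cancel_left, zsmul_eq_mul, nsmul_one, neg_add_eq_sub]
  push_cast
  have hsign : (-1 : R) ^ (s + d) * (-1) ^ d = (-1) ^ s := by
    rw [pow_add, mul_assoc, ← mul_pow, neg_one_mul, neg_neg, one_pow, mul_one]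
  rw [← hsign]
  ring

theorem sum_range_two_mul_add_one_of_symm {α : Type*} [AddCommMonoid α] (f : ℕ → α) (J : ℕ)
    (hf : ∀ s ≤ 2 * J, f (2 * J - s) = f s) :
    ∑ s ∈ range (2 * J + 1), f s = 2 • ∑ s ∈ Icc (J + 1) (2 * J), f s + f J := by
  have hreflect : ∑ s ∈ range J, f s = ∑ s ∈ Icc (J + 1) (2 * J), f s := by
    rw [← Nat.Ico_zero_eq_range, ← sum_congr rfl fun s hs ↦ hf s (by grind),
      sum_Ico_reflect _ _ (by omega), ← Ico_add_one_right_eq_Icc]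
    congr 2; omega
  rw [← sum_range_add_sum_Ico _ (by omega : J + 1 ≤ 2 * J + 1), sum_range_succ,
    Ico_add_one_right_eq_Icc, hreflect, two_nsmul]
  abel

theorem two_mul_sum_Icc_neg_one_pow_mul_choose_mul_sub_pow {R : Type*} [CommRing R]
    (J k : ℕ) (hk : k ≠ 0) :
    2 * ∑ s ∈ Icc (J + 1) (2 * J), (-1 : R) ^ s * (2 * J).choose s * ((s : R) - J) ^ (2 * k)
      = Δ_[1] ^[2 * J] (fun r : R ↦ r ^ (2 * k)) (-J) := by
  have hsplit := sum_range_two_mul_add_one_of_symm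
    (fun s ↦ (-1 : R) ^ s * (2 * J).choose s * ((s : R) - J) ^ (2 * k)) J fun s hs ↦ by
      have hparity : (2 * J - s) % 2 = s % 2 := by omega
      have hreflect : ((2 * J - s : ℕ) : R) - J = -((s : R) - J) := by
        push_cast [Nat.cast_sub hs]; ring
      rw [neg_one_pow_eq_pow_mod_two, hparity, ← neg_one_pow_eq_pow_mod_two, Nat.choose_symm hs,
        hreflect, (even_two_mul k).neg_pow]
  beta_reduce at hsplit
  rw [sum_range_neg_one_pow_mul_choose_mul_sub_pow, pow_mul, neg_one_sq, one_pow, one_mul,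
    sub_self, zero_pow (by positivity), mul_zero, add_zero, nsmul_eq_mul, Nat.cast_ofNat] at hsplit
  exact hsplit.symm

-- Indices are 0-based: this is the paper's `m_{i+1,j+1}`. For `i < j` the truncated subtraction
-- leaves the single term `t = 0` instead of an empty sum.
def changeOfBasisEntry (i j : ℕ) : ℚ :=
  ∑ t ∈ range (i + 1 - (j + 1) + 1),
    (1 / ((2 : ℚ) ^ (2 * (t : ℤ) - 1) * (2 * t + 1).factorial * (2 * (i + 1 - t)).factorial))
      * ∑ s ∈ Icc (j + 2) (2 * (j + 1)),
          (-1 : ℚ) ^ s * (2 * (j + 1)).choose s * ((s : ℚ) - (j + 1)) ^ (2 * (i + 1 - t))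

theorem changeOfBasisEntry_of_le {i j : ℕ} (h : i ≤ j) :
    changeOfBasisEntry i j
      = Δ_[1] ^[2 * (j + 1)] (fun r : ℚ ↦ r ^ (2 * (i + 1))) (-(j + 1))
        / (2 * (i + 1)).factorial := by
  have hhalf :=
    two_mul_sum_Icc_neg_one_pow_mul_choose_mul_sub_pow (R := ℚ) (j + 1) (i + 1) i.succ_ne_zero
  push_cast at hhalf
  rw [changeOfBasisEntry, show i + 1 - (j + 1) + 1 = 1 by omega, sum_range_one, Nat.sub_zero,
    ← hhalf]
  norm_num
  ring

theorem changeOfBasisEntry_of_lt {i j : ℕ} (h : i < j) : changeOfBasisEntry i j = 0 := by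
  rw [changeOfBasisEntry_of_le h.le, fwdDiff_iter_pow_eq_zero_of_lt (by omega), Pi.zero_apply,
    zero_div]

theorem changeOfBasisEntry_self (i : ℕ) : changeOfBasisEntry i i = 1 := by
  rw [changeOfBasisEntry_of_le le_rfl, fwdDiff_iter_eq_factorial]
  simp [Nat.factorial_ne_zero]

theorem stmt8_general (m : ℕ) (M : Matrix (Fin m) (Fin m) ℚ)
    (hM : ∀ i j : Fin m, M i j =
      ∑ t ∈ Finset.range ((i : ℕ) + 1 - ((j : ℕ) + 1) + 1),
        (1 / ((2 : ℚ) ^ (2 * (t : ℤ) - 1) * ((2 * t + 1).factorial)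
            * ((2 * ((i : ℕ) + 1 - t)).factorial)))
          * ∑ s ∈ Finset.Icc ((j : ℕ) + 2) (2 * ((j : ℕ) + 1)),
              (-1 : ℚ) ^ s * ((2 * ((j : ℕ) + 1)).choose s)
                * ((s : ℚ) - ((j : ℕ) + 1)) ^ (2 * ((i : ℕ) + 1 - t))) :
    (∀ i j : Fin m, (i : ℕ) < (j : ℕ) → M i j = 0) ∧
      (∀ i : Fin m, M i i = 1) ∧ IsUnit M := by
  have hentry : ∀ i j, M i j = changeOfBasisEntry i j := hM
  have hlower : ∀ i j : Fin m, (i : ℕ) < (j : ℕ) → M i j = 0 := fun i j hij ↦ by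
    rw [hentry, changeOfBasisEntry_of_lt hij]
  have hdiag : ∀ i : Fin m, M i i = 1 := fun i ↦ by rw [hentry, changeOfBasisEntry_self]
  have hdet : M.det = 1 := by
    rw [Matrix.det_of_isLowerTriangular M hlower]
    exact prod_eq_one fun i _ ↦ hdiag i
  exact ⟨hlower, hdiag, (Matrix.isUnit_iff_isUnit_det M).mpr (hdet ▸ isUnit_one)⟩

theorem stmt8 (m : ℕ) (hm : 1 ≤ m) (M : Matrix (Fin m) (Fin m) ℚ)
    (hM : ∀ i j : Fin m, M i j =
      ∑ t ∈ Finset.range ((i : ℕ) + 1 - ((j : ℕ) + 1) + 1),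
        (1 / ((2 : ℚ) ^ (2 * (t : ℤ) - 1) * ((2 * t + 1).factorial)
            * ((2 * ((i : ℕ) + 1 - t)).factorial)))
          * ∑ s ∈ Finset.Icc ((j : ℕ) + 2) (2 * ((j : ℕ) + 1)),
              (-1 : ℚ) ^ s * ((2 * ((j : ℕ) + 1)).choose s)
                * ((s : ℚ) - ((j : ℕ) + 1)) ^ (2 * ((i : ℕ) + 1 - t))) :
    (∀ i j : Fin m, (i : ℕ) < (j : ℕ) → M i j = 0) ∧
      (∀ i : Fin m, M i i = 1) ∧ IsUnit M :=
  stmt8_general m M hM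
end

section
/- Let P(x,y) be a polynomial of degree at most 3 in x and at most 3 in y (a tensor-product bicubic polynomial), a, b ∈ ℝ and h > 0. With P̄(x,y) = (1/h²)·∫_{x-h/2}^{x+h/2}∫_{y-h/2}^{y+h/2} P(s,t) dt ds the cell average and Δ^{2,x}, Δ^{2,y} the second central differences with step h in each variable, P(a,b) = P̄(a,b) - (1/24)·(Δ^{2,x}P̄(a,b) + Δ^{2,y}P̄(a,b)) + (1/576)·Δ^{2,x}Δ^{2,y}P̄(a,b). -/
/-!
The cell average of `∑ cᵢⱼ sⁱ tʲ` is `∑ cᵢⱼ Aᵢ(x) Aⱼ(y)`, where `Aₙ` is the one-dimensional cell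
average of `xⁿ`, and the correction operator factors as `(1 - Δ²ₓ/24)(1 - Δ²ᵧ/24)`. So the theorem
reduces to the one-dimensional identity `Aₙ - Δ²Aₙ/24 = xⁿ` for `n ≤ 3`, a direct computation
with `Aₙ(x) = ((x + h/2)ⁿ⁺¹ - (x - h/2)ⁿ⁺¹) / ((n + 1) h)`.
-/

open Finset

noncomputable section

def secondDiff (h : ℝ) (g : ℝ → ℝ) (x : ℝ) : ℝ := g (x - h) - 2 * g x + g (x + h)

def cellAverage (h : ℝ) (g : ℝ → ℝ) (x : ℝ) : ℝ := (1 / h) * ∫ s in (x - h / 2)..(x + h / 2), g s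

def cellAverage₂ (h : ℝ) (F : ℝ → ℝ → ℝ) (x y : ℝ) : ℝ :=
  (1 / h ^ 2) * ∫ s in (x - h / 2)..(x + h / 2), ∫ t in (y - h / 2)..(y + h / 2), F s t

def avgToPoint (h : ℝ) (g : ℝ → ℝ) (x : ℝ) : ℝ := g x - (1 / 24) * secondDiff h g x

def avgToPoint₂ (h : ℝ) (F : ℝ → ℝ → ℝ) (a b : ℝ) : ℝ :=
  F a b - (1 / 24) * (secondDiff h (F · b) a + secondDiff h (F a ·) b)
    + (1 / 576) * secondDiff h (fun x => secondDiff h (F x ·) b) a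

end

theorem cellAverage_pow (h x : ℝ) (n : ℕ) :
    cellAverage h (· ^ n) x = ((x + h / 2) ^ (n + 1) - (x - h / 2) ^ (n + 1)) / ((n + 1) * h) := by
  rw [cellAverage, integral_pow]
  field_simp

theorem avgToPoint_cellAverage_pow {h : ℝ} (hh : h ≠ 0) {n : ℕ} (hn : n < 4) (x : ℝ) :
    avgToPoint h (cellAverage h (· ^ n)) x = x ^ n := by
  simp only [avgToPoint, secondDiff, cellAverage_pow]
  interval_cases n <;> (push_cast; field_simp; ring)

theorem avgToPoint_const_mul (h c : ℝ) (g : ℝ → ℝ) (x : ℝ) :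
    avgToPoint h (fun y => c * g y) x = c * avgToPoint h g x := by
  simp only [avgToPoint, secondDiff]; ring

theorem avgToPoint₂_mul (h : ℝ) (u v : ℝ → ℝ) (a b : ℝ) :
    avgToPoint₂ h (fun x y => u x * v y) a b = avgToPoint h u a * avgToPoint h v b := by
  simp only [avgToPoint₂, avgToPoint, secondDiff]; ring

theorem avgToPoint₂_sum {ι : Type*} (s : Finset ι) (h : ℝ) (F : ι → ℝ → ℝ → ℝ) (a b : ℝ) :
    avgToPoint₂ h (fun x y => ∑ k ∈ s, F k x y) a b = ∑ k ∈ s, avgToPoint₂ h (F k) a b := by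
  classical
  induction s using Finset.induction_on with
  | empty => simp [avgToPoint₂, secondDiff]
  | insert k s hk ih =>
    simp only [avgToPoint₂, secondDiff, sum_insert hk] at ih ⊢
    linear_combination ih

theorem cellAverage₂_sum_mul {ι κ : Type*} [Fintype ι] [Fintype κ] {h : ℝ} (hh : h ≠ 0)
    (c : ι → κ → ℝ) {u : ι → ℝ → ℝ} {v : κ → ℝ → ℝ} (hu : ∀ i, Continuous (u i))
    (hv : ∀ j, Continuous (v j)) (x y : ℝ) :
    cellAverage₂ h (fun s t => ∑ i, ∑ j, c i j * u i s * v j t) x y =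
      ∑ i, ∑ j, c i j * cellAverage h (u i) x * cellAverage h (v j) y := by
  have inner : ∀ s, ∫ t in (y - h / 2)..(y + h / 2), ∑ i, ∑ j, c i j * u i s * v j t =
      ∑ i, ∑ j, c i j * u i s * ∫ t in (y - h / 2)..(y + h / 2), v j t := by
    intro s
    rw [intervalIntegral.integral_finsetSum fun i _ =>
      by apply Continuous.intervalIntegrable; fun_prop]
    refine sum_congr rfl fun i _ => ?_
    rw [intervalIntegral.integral_finsetSum fun j _ =>
      by apply Continuous.intervalIntegrable; fun_prop]
    simp only [intervalIntegral.integral_const_mul]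
  simp only [cellAverage₂, inner]
  rw [intervalIntegral.integral_finsetSum fun i _ =>
    by apply Continuous.intervalIntegrable; fun_prop, mul_sum]
  refine sum_congr rfl fun i _ => ?_
  rw [intervalIntegral.integral_finsetSum fun j _ =>
    by apply Continuous.intervalIntegrable; fun_prop, mul_sum]
  refine sum_congr rfl fun j _ => ?_
  simp only [intervalIntegral.integral_const_mul, intervalIntegral.integral_mul_const, cellAverage]
  field_simp

theorem stmt17 (c : Fin 4 → Fin 4 → ℝ) (P : ℝ → ℝ → ℝ)
    (hP : ∀ x y : ℝ, P x y = ∑ i : Fin 4, ∑ j : Fin 4, c i j * x ^ (i : ℕ) * y ^ (j : ℕ))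
    (a b h : ℝ) (hh : 0 < h) (Pb : ℝ → ℝ → ℝ)
    (hPb : ∀ x y : ℝ, Pb x y = (1 / h ^ 2) *
        ∫ s in (x - h / 2)..(x + h / 2), ∫ t in (y - h / 2)..(y + h / 2), P s t) :
    P a b = Pb a b
        - (1 / 24) * ((Pb (a - h) b - 2 * Pb a b + Pb (a + h) b)
            + (Pb a (b - h) - 2 * Pb a b + Pb a (b + h)))
        + (1 / 576) * ((Pb (a - h) (b - h) - 2 * Pb (a - h) b + Pb (a - h) (b + h))
            - 2 * (Pb a (b - h) - 2 * Pb a b + Pb a (b + h))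
            + (Pb (a + h) (b - h) - 2 * Pb (a + h) b + Pb (a + h) (b + h))) := by
  have hP' : P = fun x y => ∑ i : Fin 4, ∑ j : Fin 4, c i j * x ^ (i : ℕ) * y ^ (j : ℕ) :=
    funext₂ hP
  have hPb_sep : Pb = fun x y => ∑ i : Fin 4, ∑ j : Fin 4,
      c i j * cellAverage h (· ^ (i : ℕ)) x * cellAverage h (· ^ (j : ℕ)) y := by
    ext x y
    rw [hPb, ← cellAverage₂, hP']
    exact cellAverage₂_sum_mul hh.ne' c (fun _ => by fun_prop) (fun _ => by fun_prop) x y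
  change P a b = avgToPoint₂ h Pb a b
  simp only [hPb_sep, hP, avgToPoint₂_sum, avgToPoint₂_mul, avgToPoint_const_mul,
    avgToPoint_cellAverage_pow hh.ne' (Fin.is_lt _)]
end
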